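/- arXiv:1508.06899 — 2 statements merged into one kernel-verified Lean document; each statement's English description precedes it below -/
import Mathlib

section
/- Bisimulation equivalence is a congruence with respect to the operators of ctACPps+REC: for all closed ctACPps+REC process terms p,q,p′,q′, every proposition φ, and every H⊆A, if p ↔ q and p′ ↔ q′ then p+p′ ↔ q+q′, p·p′ ↔ q·q′, φ:→p ↔ φ:→q, φ⌃p ↔ φ⌃q, p∥p′ ↔ q∥q′, p⌊⌊p′ ↔ q⌊⌊q′, p|p′ ↔ q|q′, and ∂_H(p) ↔ ∂_H(q). -/
set_option autoImplicit true
set_option maxHeartbeats 1000000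

/-- The three truth values of LP→⊥: true, false, both. -/
inductive V3 : Type
  | t
  | f
  | b
  deriving DecidableEq

/-- Formulas of LP→⊥ over propositional variables of type `α`. -/
inductive Fml (α : Type) : Type
  | var : α → Fml α
  | bot : Fml α
  | neg : Fml α → Fml α
  | conj : Fml α → Fml α → Fml α
  | disj : Fml α → Fml α → Fml α
  | imp : Fml α → Fml α → Fml α

namespace Fml

/-- ⊤ abbreviates ¬⊥. -/
def top {α : Type} : Fml α := neg bot

/-- A↔B abbreviates (A→B)∧(B→A). -/
def iff' {α : Type} (A B : Fml α) : Fml α := conj (imp A B) (imp B A)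

end Fml

/-- LP→⊥ truth table for negation. -/
def negT : V3 → V3
  | .f => .t
  | .t => .f
  | .b => .b

/-- LP→⊥ truth table for conjunction. -/
def conjT : V3 → V3 → V3
  | .f, _ => .f
  | _, .f => .f
  | .t, .t => .t
  | _, _ => .b

/-- LP→⊥ truth table for disjunction. -/
def disjT : V3 → V3 → V3
  | .t, _ => .t
  | _, .t => .t
  | .f, .f => .f
  | _, _ => .b

/-- LP→⊥ truth table for implication. -/
def impT : V3 → V3 → V3
  | .f, _ => .t
  | _, y => y

/-- The LP→⊥ valuation determined by an assignment `σ` of truth values to variables. -/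
def eval {α : Type} (σ : α → V3) : Fml α → V3
  | .var x => σ x
  | .bot => .f
  | .neg A => negT (eval σ A)
  | .conj A B => conjT (eval σ A) (eval σ B)
  | .disj A B => disjT (eval σ A) (eval σ B)
  | .imp A B => impT (eval σ A) (eval σ B)

/-- Logical equivalence in LP→⊥: the same value under every valuation. -/
def FEquiv {α : Type} (A B : Fml α) : Prop := ∀ σ : α → V3, eval σ A = eval σ B

/-- `φ ∈ [⊥]`: `φ` is logically equivalent to ⊥. -/
def EqBot {α : Type} (φ : Fml α) : Prop := ∀ σ : α → V3, eval σ φ = V3.f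

/-- Semantic consequence in LP→⊥ (designated values t and b). -/
def SemCons {α : Type} (Γ : Set (Fml α)) (A : Fml α) : Prop :=
  ∀ σ : α → V3, (∀ C ∈ Γ, eval σ C ≠ V3.f) → eval σ A ≠ V3.f

/-- The Hilbert system of LP→⊥, with hypotheses `Γ`. -/
inductive Hilb {α : Type} (Γ : Set (Fml α)) : Fml α → Prop
  | hyp {A : Fml α} : A ∈ Γ → Hilb Γ A
  | mp {A B : Fml α} : Hilb Γ (A.imp B) → Hilb Γ A → Hilb Γ B
  | ax1 (A B : Fml α) : Hilb Γ (A.imp (B.imp A))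
  | ax2 (A B C : Fml α) : Hilb Γ ((A.imp (B.imp C)).imp ((A.imp B).imp (A.imp C)))
  | ax3 (A B : Fml α) : Hilb Γ (((A.imp B).imp A).imp A)
  | ax4 (A : Fml α) : Hilb Γ (Fml.bot.imp A)
  | ax5 (A B : Fml α) : Hilb Γ ((A.conj B).imp A)
  | ax6 (A B : Fml α) : Hilb Γ ((A.conj B).imp B)
  | ax7 (A B : Fml α) : Hilb Γ (A.imp (B.imp (A.conj B)))
  | ax8 (A B : Fml α) : Hilb Γ (A.imp (A.disj B))
  | ax9 (A B : Fml α) : Hilb Γ (B.imp (A.disj B))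
  | ax10 (A B C : Fml α) : Hilb Γ ((A.imp C).imp ((B.imp C).imp ((A.disj B).imp C)))
  | ax11 (A : Fml α) : Hilb Γ (Fml.iff' A.neg.neg A)
  | ax12 (A B : Fml α) : Hilb Γ (Fml.iff' (A.imp B).neg (A.conj B.neg))
  | ax13 (A B : Fml α) : Hilb Γ (Fml.iff' (A.conj B).neg (A.neg.disj B.neg))
  | ax14 (A B : Fml α) : Hilb Γ (Fml.iff' (A.disj B).neg (A.neg.conj B.neg))
  | ax15 (A : Fml α) : Hilb Γ (A.disj A.neg)

/-- The internalization (A↔B)∧(¬A↔¬B) of logical equivalence. -/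
def InternEq {α : Type} (φ ψ : Fml α) : Fml α :=
  (Fml.iff' φ ψ).conj (Fml.iff' φ.neg ψ.neg)

/-- Derivable equality of propositions: the least congruence containing the
instances of axiom IMP (φ = ψ whenever ⊢ (φ↔ψ)∧(¬φ↔¬ψ)). -/
inductive PropEq {α : Type} : Fml α → Fml α → Prop
  | imp {φ ψ} : Hilb (∅ : Set (Fml α)) (InternEq φ ψ) → PropEq φ ψ
  | refl (φ) : PropEq φ φ
  | symm {φ ψ} : PropEq φ ψ → PropEq ψ φ
  | trans {φ ψ χ} : PropEq φ ψ → PropEq ψ χ → PropEq φ χ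
  | negC {φ ψ} : PropEq φ ψ → PropEq φ.neg ψ.neg
  | conjC {φ ψ φ' ψ'} : PropEq φ ψ → PropEq φ' ψ' → PropEq (φ.conj φ') (ψ.conj ψ')
  | disjC {φ ψ φ' ψ'} : PropEq φ ψ → PropEq φ' ψ' → PropEq (φ.disj φ') (ψ.disj ψ')
  | impC {φ ψ φ' ψ'} : PropEq φ ψ → PropEq φ' ψ' → PropEq (φ.imp φ') (ψ.imp ψ')

/-- Process terms of ctACPps+REC: the ctACPps operators together with process
variables `pvar X` and, for each recursive specification E = {X = t_X | X ∈ V}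
(represented by `V : ℕ → Prop` and `t : ℕ → RT α Act`) and each `X`, a constant
`rec V t X` standing for ⟨X|E⟩. -/
inductive RT (α Act : Type) : Type
  | act : Act → RT α Act
  | delta : RT α Act
  | nex : RT α Act
  | alt : RT α Act → RT α Act → RT α Act
  | seq : RT α Act → RT α Act → RT α Act
  | gc : Fml α → RT α Act → RT α Act
  | se : Fml α → RT α Act → RT α Act
  | par : RT α Act → RT α Act → RT α Act
  | lm : RT α Act → RT α Act → RT α Act
  | cm : RT α Act → RT α Act → RT α Act
  | encap : Set Act → RT α Act → RT α Act
  | pvar : ℕ → RT α Act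
  | rcn : (ℕ → Prop) → (ℕ → RT α Act) → ℕ → RT α Act

/-- The constant corresponding to an element of A ∪ {δ} (encoded as `Option Act`,
with `none` standing for δ). -/
def actd {α Act : Type} : Option Act → RT α Act
  | some a => .act a
  | none => .delta

section
variable {α Act : Type}

/-- A term is a plain ctACPps term: it contains no recursion constants. -/
def Plain : RT α Act → Prop
  | .act _ => True
  | .delta => True
  | .nex => True
  | .alt p q => Plain p ∧ Plain q
  | .seq p q => Plain p ∧ Plain q
  | .gc _ p => Plain p
  | .se _ p => Plain p
  | .par p q => Plain p ∧ Plain q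
  | .lm p q => Plain p ∧ Plain q
  | .cm p q => Plain p ∧ Plain q
  | .encap _ p => Plain p
  | .pvar _ => True
  | .rcn _ _ _ => False

/-- All process variables occurring in the term belong to `V`. -/
def VarsIn (V : ℕ → Prop) : RT α Act → Prop
  | .act _ => True
  | .delta => True
  | .nex => True
  | .alt p q => VarsIn V p ∧ VarsIn V q
  | .seq p q => VarsIn V p ∧ VarsIn V q
  | .gc _ p => VarsIn V p
  | .se _ p => VarsIn V p
  | .par p q => VarsIn V p ∧ VarsIn V q
  | .lm p q => VarsIn V p ∧ VarsIn V q
  | .cm p q => VarsIn V p ∧ VarsIn V q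
  | .encap _ p => VarsIn V p
  | .pvar X => V X
  | .rcn _ _ _ => True

/-- The term contains no (free) process variables. -/
def Closed : RT α Act → Prop
  | .act _ => True
  | .delta => True
  | .nex => True
  | .alt p q => Closed p ∧ Closed q
  | .seq p q => Closed p ∧ Closed q
  | .gc _ p => Closed p
  | .se _ p => Closed p
  | .par p q => Closed p ∧ Closed q
  | .lm p q => Closed p ∧ Closed q
  | .cm p q => Closed p ∧ Closed q
  | .encap _ p => Closed p
  | .pvar _ => False
  | .rcn _ _ _ => True

/-- The term is an action constant. -/
def IsAct : RT α Act → Prop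
  | .act _ => True
  | _ => False

/-- All occurrences of the variable `Y` in the term are guarded, i.e. lie within
a subterm of the form a·t′ with a ∈ A. -/
def Guarded (Y : ℕ) : RT α Act → Prop
  | .act _ => True
  | .delta => True
  | .nex => True
  | .alt p q => Guarded Y p ∧ Guarded Y q
  | .seq p q => Guarded Y p ∧ (IsAct p ∨ Guarded Y q)
  | .gc _ p => Guarded Y p
  | .se _ p => Guarded Y p
  | .par p q => Guarded Y p ∧ Guarded Y q
  | .lm p q => Guarded Y p ∧ Guarded Y q
  | .cm p q => Guarded Y p ∧ Guarded Y q
  | .encap _ p => Guarded Y p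
  | .pvar X => X ≠ Y
  | .rcn _ _ _ => True

open Classical in
/-- ⟨u|E⟩: replace each variable of `V` in `u` by the corresponding constant
⟨Y|E⟩ of the recursive specification E given by `V` and `t`. -/
noncomputable def substRec (V : ℕ → Prop) (t : ℕ → RT α Act) : RT α Act → RT α Act
  | .act a => .act a
  | .delta => .delta
  | .nex => .nex
  | .alt p q => .alt (substRec V t p) (substRec V t q)
  | .seq p q => .seq (substRec V t p) (substRec V t q)
  | .gc φ p => .gc φ (substRec V t p)
  | .se φ p => .se φ (substRec V t p)
  | .par p q => .par (substRec V t p) (substRec V t q)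
  | .lm p q => .lm (substRec V t p) (substRec V t q)
  | .cm p q => .cm (substRec V t p) (substRec V t q)
  | .encap H p => .encap H (substRec V t p)
  | .pvar X => if V X then .rcn V t X else .pvar X
  | .rcn W u Y => .rcn W u Y

open Classical in
/-- Replace each variable `Y ∈ V` in the term by the process term `p Y`. -/
noncomputable def substF (V : ℕ → Prop) (p : ℕ → RT α Act) : RT α Act → RT α Act
  | .act a => .act a
  | .delta => .delta
  | .nex => .nex
  | .alt u v => .alt (substF V p u) (substF V p v)
  | .seq u v => .seq (substF V p u) (substF V p v)
  | .gc φ u => .gc φ (substF V p u)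
  | .se φ u => .se φ (substF V p u)
  | .par u v => .par (substF V p u) (substF V p v)
  | .lm u v => .lm (substF V p u) (substF V p v)
  | .cm u v => .cm (substF V p u) (substF V p v)
  | .encap H u => .encap H (substF V p u)
  | .pvar X => if V X then p X else .pvar X
  | .rcn W u Y => .rcn W u Y


/-- Derivable equality from the axioms of ctACPps, on open ctACPps+REC terms
(used in the definition of guardedness of recursive specifications). -/
inductive RDerivA (γ : Option Act → Option Act → Option Act) :
    RT α Act → RT α Act → Prop
  | refl (p : RT α Act) : RDerivA γ p p
  | symm {p q} : RDerivA γ p q → RDerivA γ q p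
  | trans {p q r} : RDerivA γ p q → RDerivA γ q r → RDerivA γ p r
  | altC {p q p' q'} : RDerivA γ p q → RDerivA γ p' q' → RDerivA γ (.alt p p') (.alt q q')
  | seqC {p q p' q'} : RDerivA γ p q → RDerivA γ p' q' → RDerivA γ (.seq p p') (.seq q q')
  | gcC {φ ψ p q} : PropEq φ ψ → RDerivA γ p q → RDerivA γ (.gc φ p) (.gc ψ q)
  | seC {φ ψ p q} : PropEq φ ψ → RDerivA γ p q → RDerivA γ (.se φ p) (.se ψ q)
  | parC {p q p' q'} : RDerivA γ p q → RDerivA γ p' q' → RDerivA γ (.par p p') (.par q q')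
  | lmC {p q p' q'} : RDerivA γ p q → RDerivA γ p' q' → RDerivA γ (.lm p p') (.lm q q')
  | cmC {p q p' q'} : RDerivA γ p q → RDerivA γ p' q' → RDerivA γ (.cm p p') (.cm q q')
  | encapC (H : Set Act) {p q} : RDerivA γ p q → RDerivA γ (.encap H p) (.encap H q)
  | A1 (x y : RT α Act) : RDerivA γ (.alt x y) (.alt y x)
  | A2 (x y z : RT α Act) : RDerivA γ (.alt (.alt x y) z) (.alt x (.alt y z))
  | A3 (x : RT α Act) : RDerivA γ (.alt x x) x
  | A4 (x y z : RT α Act) : RDerivA γ (.seq (.alt x y) z) (.alt (.seq x z) (.seq y z))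
  | A5 (x y z : RT α Act) : RDerivA γ (.seq (.seq x y) z) (.seq x (.seq y z))
  | A6 (x : RT α Act) : RDerivA γ (.alt x .delta) x
  | A7 (x : RT α Act) : RDerivA γ (.seq .delta x) .delta
  | NE1 (x : RT α Act) : RDerivA γ (.alt x .nex) .nex
  | NE2 (x : RT α Act) : RDerivA γ (.seq .nex x) .nex
  | NE3 (a : Option Act) : RDerivA γ (.seq (actd a) .nex) (.delta : RT α Act)
  | GC1 (x : RT α Act) : RDerivA γ (.gc Fml.top x) x
  | GC2 (x : RT α Act) : RDerivA γ (.gc .bot x) .delta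
  | GC3 (φ : Fml α) : RDerivA γ (.gc φ .delta) (.delta : RT α Act)
  | GC4 (φ : Fml α) (x y : RT α Act) :
      RDerivA γ (.gc φ (.alt x y)) (.alt (.gc φ x) (.gc φ y))
  | GC5 (φ : Fml α) (x y : RT α Act) : RDerivA γ (.gc φ (.seq x y)) (.seq (.gc φ x) y)
  | GC6 (φ ψ : Fml α) (x : RT α Act) : RDerivA γ (.gc φ (.gc ψ x)) (.gc (φ.conj ψ) x)
  | GC7 (φ ψ : Fml α) (x : RT α Act) :
      RDerivA γ (.gc (φ.disj ψ) x) (.alt (.gc φ x) (.gc ψ x))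
  | SE1 (x : RT α Act) : RDerivA γ (.se Fml.top x) x
  | SE2 (x : RT α Act) : RDerivA γ (.se .bot x) .nex
  | SE3 (φ : Fml α) : RDerivA γ (.se φ .nex) (.nex : RT α Act)
  | SE4 (φ : Fml α) (x y : RT α Act) : RDerivA γ (.alt (.se φ x) y) (.se φ (.alt x y))
  | SE5 (φ : Fml α) (x y : RT α Act) : RDerivA γ (.seq (.se φ x) y) (.se φ (.seq x y))
  | SE6 (φ ψ : Fml α) (x : RT α Act) : RDerivA γ (.se φ (.se ψ x)) (.se (φ.conj ψ) x)
  | SE7 (φ : Fml α) (x : RT α Act) : RDerivA γ (.se φ (.gc φ x)) (.se φ x)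
  | SE8 (φ ψ : Fml α) (x : RT α Act) :
      RDerivA γ (.gc φ (.se ψ x)) (.se (φ.imp ψ) (.gc φ x))
  | CM1 (x y : RT α Act) :
      RDerivA γ (.par x y) (.alt (.alt (.lm x y) (.lm y x)) (.cm x y))
  | CM2S (a : Option Act) (x : RT α Act) :
      RDerivA γ (.lm (actd a) x) (.alt (.seq (actd a) x) (.encap Set.univ x))
  | CM3S (a : Option Act) (x y : RT α Act) :
      RDerivA γ (.lm (.seq (actd a) x) y)
        (.alt (.seq (actd a) (.par x y)) (.encap Set.univ y))
  | CM4 (x y z : RT α Act) : RDerivA γ (.lm (.alt x y) z) (.alt (.lm x z) (.lm y z))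
  | CM5 (a b : Option Act) (x : RT α Act) :
      RDerivA γ (.cm (.seq (actd a) x) (actd b)) (.seq (actd (γ a b)) x)
  | CM6 (a b : Option Act) (x : RT α Act) :
      RDerivA γ (.cm (actd a) (.seq (actd b) x)) (.seq (actd (γ a b)) x)
  | CM7 (a b : Option Act) (x y : RT α Act) :
      RDerivA γ (.cm (.seq (actd a) x) (.seq (actd b) y)) (.seq (actd (γ a b)) (.par x y))
  | CM8 (x y z : RT α Act) : RDerivA γ (.cm (.alt x y) z) (.alt (.cm x z) (.cm y z))
  | CM9 (x y z : RT α Act) : RDerivA γ (.cm x (.alt y z)) (.alt (.cm x y) (.cm x z))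
  | CF (a b : Option Act) : RDerivA γ (.cm (actd a) (actd b)) (actd (γ a b) : RT α Act)
  | C1 (a b : Option Act) :
      RDerivA γ (.cm (actd a) (actd b)) (.cm (actd b) (actd a) : RT α Act)
  | C2 (a b c : Option Act) :
      RDerivA γ (.cm (.cm (actd a) (actd b)) (actd c))
        (.cm (actd a) (.cm (actd b) (actd c)) : RT α Act)
  | C3 (a : Option Act) : RDerivA γ (.cm .delta (actd a)) (.delta : RT α Act)
  | D1 (H : Set Act) (a : Act) : a ∉ H → RDerivA γ (.encap H (.act a)) (.act a)
  | D1d (H : Set Act) : RDerivA γ (.encap H (.delta : RT α Act)) .delta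
  | D2 (H : Set Act) (a : Act) : a ∈ H → RDerivA γ (.encap H (.act a)) .delta
  | D3 (H : Set Act) (x y : RT α Act) :
      RDerivA γ (.encap H (.alt x y)) (.alt (.encap H x) (.encap H y))
  | D4 (H : Set Act) (x y : RT α Act) :
      RDerivA γ (.encap H (.seq x y)) (.seq (.encap H x) (.encap H y))
  | GC8S (φ : Fml α) (x y : RT α Act) :
      RDerivA γ (.lm (.gc φ x) y) (.alt (.gc φ (.lm x y)) (.encap Set.univ y))
  | GC9S (φ : Fml α) (x y : RT α Act) :
      RDerivA γ (.cm (.gc φ x) y) (.alt (.gc φ (.cm x y)) (.encap Set.univ y))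
  | GC10S (φ : Fml α) (x y : RT α Act) :
      RDerivA γ (.cm x (.gc φ y)) (.alt (.gc φ (.cm x y)) (.encap Set.univ x))
  | GC11 (H : Set Act) (φ : Fml α) (x : RT α Act) :
      RDerivA γ (.encap H (.gc φ x)) (.gc φ (.encap H x))
  | SE9 (φ : Fml α) (x y : RT α Act) : RDerivA γ (.lm (.se φ x) y) (.se φ (.lm x y))
  | SE10 (φ : Fml α) (x y : RT α Act) : RDerivA γ (.cm (.se φ x) y) (.se φ (.cm x y))
  | SE11 (φ : Fml α) (x y : RT α Act) : RDerivA γ (.cm x (.se φ y)) (.se φ (.cm x y))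
  | SE12 (H : Set Act) (φ : Fml α) (x : RT α Act) :
      RDerivA γ (.encap H (.se φ x)) (.se φ (.encap H x))

/-- Rewriting of (open) terms using the axioms of ctACPps in either direction
and/or the equations of the recursive specification from left to right. -/
inductive Rw (γ : Option Act → Option Act → Option Act)
    (V : ℕ → Prop) (t : ℕ → RT α Act) : RT α Act → RT α Act → Prop
  | ax {p q} : RDerivA γ p q → Rw γ V t p q
  | unfold {X} : V X → Rw γ V t (.pvar X) (t X)
  | refl (p : RT α Act) : Rw γ V t p p
  | trans {p q r} : Rw γ V t p q → Rw γ V t q r → Rw γ V t p r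
  | altC {p q p' q'} : Rw γ V t p q → Rw γ V t p' q' → Rw γ V t (.alt p p') (.alt q q')
  | seqC {p q p' q'} : Rw γ V t p q → Rw γ V t p' q' → Rw γ V t (.seq p p') (.seq q q')
  | gcC (φ : Fml α) {p q} : Rw γ V t p q → Rw γ V t (.gc φ p) (.gc φ q)
  | seC (φ : Fml α) {p q} : Rw γ V t p q → Rw γ V t (.se φ p) (.se φ q)
  | parC {p q p' q'} : Rw γ V t p q → Rw γ V t p' q' → Rw γ V t (.par p p') (.par q q')
  | lmC {p q p' q'} : Rw γ V t p q → Rw γ V t p' q' → Rw γ V t (.lm p p') (.lm q q')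
  | cmC {p q p' q'} : Rw γ V t p q → Rw γ V t p' q' → Rw γ V t (.cm p p') (.cm q q')
  | encapC (H : Set Act) {p q} : Rw γ V t p q → Rw γ V t (.encap H p) (.encap H q)

/-- The recursive specification given by `V` and `t` is guarded: it can be
rewritten (using the axioms of ctACPps in either direction and/or its own
equations from left to right) to a recursive specification in which all
occurrences of variables of `V` in the right-hand sides are guarded. -/
def GuardedSpecR (γ : Option Act → Option Act → Option Act)
    (V : ℕ → Prop) (t : ℕ → RT α Act) : Prop :=
  ∃ t' : ℕ → RT α Act,
    (∀ X, V X → Rw γ V t (t X) (t' X) ∧ Plain (t' X) ∧ VarsIn V (t' X)) ∧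
    (∀ X, V X → ∀ Y, V Y → Guarded Y (t' X))

/-- The pair `(V, t)` is a guarded recursive specification over ctACPps:
the right-hand sides are ctACPps terms with variables from `V`, and the
specification is guarded. -/
def WFSpecR (γ : Option Act → Option Act → Option Act)
    (V : ℕ → Prop) (t : ℕ → RT α Act) : Prop :=
  (∀ X, V X → Plain (t X) ∧ VarsIn V (t X)) ∧ GuardedSpecR γ V t

/-- Every recursion constant occurring in the term comes from a guarded
recursive specification. -/
def WT (γ : Option Act → Option Act → Option Act) : RT α Act → Prop
  | .act _ => True
  | .delta => True
  | .nex => True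
  | .alt p q => WT γ p ∧ WT γ q
  | .seq p q => WT γ p ∧ WT γ q
  | .gc _ p => WT γ p
  | .se _ p => WT γ p
  | .par p q => WT γ p ∧ WT γ q
  | .lm p q => WT γ p ∧ WT γ q
  | .cm p q => WT γ p ∧ WT γ q
  | .encap _ p => WT γ p
  | .pvar _ => True
  | .rcn V t X => V X ∧ WFSpecR γ V t


/-- The signal relation: `RSig γ p φ` holds iff φ is the signal emitted by `p`
according to the signal rules, ⟨X|E⟩ having exactly the signal of ⟨t_X|E⟩. -/
inductive RSig (γ : Option Act → Option Act → Option Act) :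
    RT α Act → Fml α → Prop
  | act (a : Act) : RSig γ (.act a) Fml.top
  | delta : RSig γ (.delta : RT α Act) Fml.top
  | nex : RSig γ (.nex : RT α Act) .bot
  | alt {p q φ ψ} : RSig γ p φ → RSig γ q ψ → RSig γ (.alt p q) (φ.conj ψ)
  | seq {p φ} (q : RT α Act) : RSig γ p φ → RSig γ (.seq p q) φ
  | gc {p φ} (ψ : Fml α) : RSig γ p φ → RSig γ (.gc ψ p) (ψ.imp φ)
  | se {p φ} (ψ : Fml α) : RSig γ p φ → RSig γ (.se ψ p) (ψ.conj φ)
  | par {p q φ ψ} : RSig γ p φ → RSig γ q ψ → RSig γ (.par p q) (φ.conj ψ)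
  | lm {p q φ ψ} : RSig γ p φ → RSig γ q ψ → RSig γ (.lm p q) (φ.conj ψ)
  | cm {p q φ ψ} : RSig γ p φ → RSig γ q ψ → RSig γ (.cm p q) (φ.conj ψ)
  | encap {p φ} (H : Set Act) : RSig γ p φ → RSig γ (.encap H p) φ
  | recR {V : ℕ → Prop} {t : ℕ → RT α Act} {X : ℕ} {φ} :
      WFSpecR γ V t → V X →
      RSig γ (substRec V t (t X)) φ → RSig γ (.rcn V t X) φ

/-- The term emits a signal that is not logically equivalent to ⊥. -/
def SigOK (γ : Option Act → Option Act → Option Act) (p : RT α Act) : Prop :=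
  ∃ χ, RSig γ p χ ∧ ¬ EqBot χ


inductive RTr (γ : Option Act → Option Act → Option Act) :
    RT α Act → Fml α → Act → Option (RT α Act) → Prop
  | act (a : Act) : RTr γ (.act a) Fml.top a none
  | altL {x φ a o} (y : RT α Act) :
      RTr γ x φ a o → SigOK γ ((RT.alt x y)) → RTr γ (.alt x y) φ a o
  | altR {y φ a o} (x : RT α Act) :
      RTr γ y φ a o → SigOK γ ((RT.alt x y)) → RTr γ (.alt x y) φ a o
  | seqT {x φ a} (y : RT α Act) :
      RTr γ x φ a none → SigOK γ (y) → RTr γ (.seq x y) φ a (some y)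
  | seqS {x φ a x'} (y : RT α Act) :
      RTr γ x φ a (some x') → RTr γ (.seq x y) φ a (some (.seq x' y))
  | gcR {x φ a o} (ψ : Fml α) :
      RTr γ x φ a o → ¬ EqBot (φ.conj ψ) → RTr γ (.gc ψ x) (φ.conj ψ) a o
  | seR {x φ a o} (ψ : Fml α) :
      RTr γ x φ a o → SigOK γ ((RT.se ψ x)) → RTr γ (.se ψ x) φ a o
  | parTL {x φ a} (y : RT α Act) :
      RTr γ x φ a none → SigOK γ ((RT.par x y)) → SigOK γ (y) →
      RTr γ (.par x y) φ a (some y)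
  | parTR (x : RT α Act) {y φ a} :
      RTr γ y φ a none → SigOK γ ((RT.par x y)) → SigOK γ (x) →
      RTr γ (.par x y) φ a (some x)
  | parSL {x φ a x'} (y : RT α Act) :
      RTr γ x φ a (some x') → SigOK γ ((RT.par x y)) →
      SigOK γ ((RT.par x' y)) → RTr γ (.par x y) φ a (some (.par x' y))
  | parSR (x : RT α Act) {y φ a y'} :
      RTr γ y φ a (some y') → SigOK γ ((RT.par x y)) →
      SigOK γ ((RT.par x y')) → RTr γ (.par x y) φ a (some (.par x y'))
  | parCTT {x y : RT α Act} {φ ψ a b c} :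
      RTr γ x φ a none → RTr γ y ψ b none → γ (some a) (some b) = some c →
      ¬ EqBot (φ.conj ψ) → SigOK γ ((RT.par x y)) →
      RTr γ (.par x y) (φ.conj ψ) c none
  | parCTS {x y : RT α Act} {φ ψ a b c y'} :
      RTr γ x φ a none → RTr γ y ψ b (some y') → γ (some a) (some b) = some c →
      ¬ EqBot (φ.conj ψ) → SigOK γ ((RT.par x y)) →
      RTr γ (.par x y) (φ.conj ψ) c (some y')
  | parCST {x y : RT α Act} {φ ψ a b c x'} :
      RTr γ x φ a (some x') → RTr γ y ψ b none → γ (some a) (some b) = some c →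
      ¬ EqBot (φ.conj ψ) → SigOK γ ((RT.par x y)) →
      RTr γ (.par x y) (φ.conj ψ) c (some x')
  | parCSS {x y : RT α Act} {φ ψ a b c x' y'} :
      RTr γ x φ a (some x') → RTr γ y ψ b (some y') → γ (some a) (some b) = some c →
      ¬ EqBot (φ.conj ψ) → SigOK γ ((RT.par x y)) →
      SigOK γ ((RT.par x' y')) →
      RTr γ (.par x y) (φ.conj ψ) c (some (.par x' y'))
  | lmT {x φ a} (y : RT α Act) :
      RTr γ x φ a none → SigOK γ ((RT.lm x y)) → SigOK γ (y) →
      RTr γ (.lm x y) φ a (some y)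
  | lmS {x φ a x'} (y : RT α Act) :
      RTr γ x φ a (some x') → SigOK γ ((RT.lm x y)) →
      SigOK γ ((RT.par x' y)) → RTr γ (.lm x y) φ a (some (.par x' y))
  | cmTT {x y : RT α Act} {φ ψ a b c} :
      RTr γ x φ a none → RTr γ y ψ b none → γ (some a) (some b) = some c →
      ¬ EqBot (φ.conj ψ) → SigOK γ ((RT.cm x y)) →
      RTr γ (.cm x y) (φ.conj ψ) c none
  | cmTS {x y : RT α Act} {φ ψ a b c y'} :
      RTr γ x φ a none → RTr γ y ψ b (some y') → γ (some a) (some b) = some c →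
      ¬ EqBot (φ.conj ψ) → SigOK γ ((RT.cm x y)) →
      RTr γ (.cm x y) (φ.conj ψ) c (some y')
  | cmST {x y : RT α Act} {φ ψ a b c x'} :
      RTr γ x φ a (some x') → RTr γ y ψ b none → γ (some a) (some b) = some c →
      ¬ EqBot (φ.conj ψ) → SigOK γ ((RT.cm x y)) →
      RTr γ (.cm x y) (φ.conj ψ) c (some x')
  | cmSS {x y : RT α Act} {φ ψ a b c x' y'} :
      RTr γ x φ a (some x') → RTr γ y ψ b (some y') → γ (some a) (some b) = some c →
      ¬ EqBot (φ.conj ψ) → SigOK γ ((RT.cm x y)) →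
      SigOK γ ((RT.par x' y')) →
      RTr γ (.cm x y) (φ.conj ψ) c (some (.par x' y'))
  | encapR {x φ a o} (H : Set Act) :
      RTr γ x φ a o → a ∉ H → RTr γ (.encap H x) φ a (Option.map (RT.encap H) o)
  | recR {V : ℕ → Prop} {t : ℕ → RT α Act} {X : ℕ} {φ a o} :
      WFSpecR γ V t → V X →
      RTr γ (substRec V t (t X)) φ a o → RTr γ (.rcn V t X) φ a o


/-- Derivable equality from the axioms of ctACPps+REC: the axioms of ctACPps
together with RDP and RSP for guarded recursive specifications. -/
inductive RDeriv (γ : Option Act → Option Act → Option Act) :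
    RT α Act → RT α Act → Prop
  | refl (p : RT α Act) : RDeriv γ p p
  | symm {p q} : RDeriv γ p q → RDeriv γ q p
  | trans {p q r} : RDeriv γ p q → RDeriv γ q r → RDeriv γ p r
  | altC {p q p' q'} : RDeriv γ p q → RDeriv γ p' q' → RDeriv γ (.alt p p') (.alt q q')
  | seqC {p q p' q'} : RDeriv γ p q → RDeriv γ p' q' → RDeriv γ (.seq p p') (.seq q q')
  | gcC {φ ψ p q} : PropEq φ ψ → RDeriv γ p q → RDeriv γ (.gc φ p) (.gc ψ q)
  | seC {φ ψ p q} : PropEq φ ψ → RDeriv γ p q → RDeriv γ (.se φ p) (.se ψ q)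
  | parC {p q p' q'} : RDeriv γ p q → RDeriv γ p' q' → RDeriv γ (.par p p') (.par q q')
  | lmC {p q p' q'} : RDeriv γ p q → RDeriv γ p' q' → RDeriv γ (.lm p p') (.lm q q')
  | cmC {p q p' q'} : RDeriv γ p q → RDeriv γ p' q' → RDeriv γ (.cm p p') (.cm q q')
  | encapC (H : Set Act) {p q} : RDeriv γ p q → RDeriv γ (.encap H p) (.encap H q)
  | A1 (x y : RT α Act) : RDeriv γ (.alt x y) (.alt y x)
  | A2 (x y z : RT α Act) : RDeriv γ (.alt (.alt x y) z) (.alt x (.alt y z))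
  | A3 (x : RT α Act) : RDeriv γ (.alt x x) x
  | A4 (x y z : RT α Act) : RDeriv γ (.seq (.alt x y) z) (.alt (.seq x z) (.seq y z))
  | A5 (x y z : RT α Act) : RDeriv γ (.seq (.seq x y) z) (.seq x (.seq y z))
  | A6 (x : RT α Act) : RDeriv γ (.alt x .delta) x
  | A7 (x : RT α Act) : RDeriv γ (.seq .delta x) .delta
  | NE1 (x : RT α Act) : RDeriv γ (.alt x .nex) .nex
  | NE2 (x : RT α Act) : RDeriv γ (.seq .nex x) .nex
  | NE3 (a : Option Act) : RDeriv γ (.seq (actd a) .nex) (.delta : RT α Act)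
  | GC1 (x : RT α Act) : RDeriv γ (.gc Fml.top x) x
  | GC2 (x : RT α Act) : RDeriv γ (.gc .bot x) .delta
  | GC3 (φ : Fml α) : RDeriv γ (.gc φ .delta) (.delta : RT α Act)
  | GC4 (φ : Fml α) (x y : RT α Act) :
      RDeriv γ (.gc φ (.alt x y)) (.alt (.gc φ x) (.gc φ y))
  | GC5 (φ : Fml α) (x y : RT α Act) : RDeriv γ (.gc φ (.seq x y)) (.seq (.gc φ x) y)
  | GC6 (φ ψ : Fml α) (x : RT α Act) : RDeriv γ (.gc φ (.gc ψ x)) (.gc (φ.conj ψ) x)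
  | GC7 (φ ψ : Fml α) (x : RT α Act) :
      RDeriv γ (.gc (φ.disj ψ) x) (.alt (.gc φ x) (.gc ψ x))
  | SE1 (x : RT α Act) : RDeriv γ (.se Fml.top x) x
  | SE2 (x : RT α Act) : RDeriv γ (.se .bot x) .nex
  | SE3 (φ : Fml α) : RDeriv γ (.se φ .nex) (.nex : RT α Act)
  | SE4 (φ : Fml α) (x y : RT α Act) : RDeriv γ (.alt (.se φ x) y) (.se φ (.alt x y))
  | SE5 (φ : Fml α) (x y : RT α Act) : RDeriv γ (.seq (.se φ x) y) (.se φ (.seq x y))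
  | SE6 (φ ψ : Fml α) (x : RT α Act) : RDeriv γ (.se φ (.se ψ x)) (.se (φ.conj ψ) x)
  | SE7 (φ : Fml α) (x : RT α Act) : RDeriv γ (.se φ (.gc φ x)) (.se φ x)
  | SE8 (φ ψ : Fml α) (x : RT α Act) :
      RDeriv γ (.gc φ (.se ψ x)) (.se (φ.imp ψ) (.gc φ x))
  | CM1 (x y : RT α Act) :
      RDeriv γ (.par x y) (.alt (.alt (.lm x y) (.lm y x)) (.cm x y))
  | CM2S (a : Option Act) (x : RT α Act) :
      RDeriv γ (.lm (actd a) x) (.alt (.seq (actd a) x) (.encap Set.univ x))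
  | CM3S (a : Option Act) (x y : RT α Act) :
      RDeriv γ (.lm (.seq (actd a) x) y)
        (.alt (.seq (actd a) (.par x y)) (.encap Set.univ y))
  | CM4 (x y z : RT α Act) : RDeriv γ (.lm (.alt x y) z) (.alt (.lm x z) (.lm y z))
  | CM5 (a b : Option Act) (x : RT α Act) :
      RDeriv γ (.cm (.seq (actd a) x) (actd b)) (.seq (actd (γ a b)) x)
  | CM6 (a b : Option Act) (x : RT α Act) :
      RDeriv γ (.cm (actd a) (.seq (actd b) x)) (.seq (actd (γ a b)) x)
  | CM7 (a b : Option Act) (x y : RT α Act) :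
      RDeriv γ (.cm (.seq (actd a) x) (.seq (actd b) y)) (.seq (actd (γ a b)) (.par x y))
  | CM8 (x y z : RT α Act) : RDeriv γ (.cm (.alt x y) z) (.alt (.cm x z) (.cm y z))
  | CM9 (x y z : RT α Act) : RDeriv γ (.cm x (.alt y z)) (.alt (.cm x y) (.cm x z))
  | CF (a b : Option Act) : RDeriv γ (.cm (actd a) (actd b)) (actd (γ a b) : RT α Act)
  | C1 (a b : Option Act) :
      RDeriv γ (.cm (actd a) (actd b)) (.cm (actd b) (actd a) : RT α Act)
  | C2 (a b c : Option Act) :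
      RDeriv γ (.cm (.cm (actd a) (actd b)) (actd c))
        (.cm (actd a) (.cm (actd b) (actd c)) : RT α Act)
  | C3 (a : Option Act) : RDeriv γ (.cm .delta (actd a)) (.delta : RT α Act)
  | D1 (H : Set Act) (a : Act) : a ∉ H → RDeriv γ (.encap H (.act a)) (.act a)
  | D1d (H : Set Act) : RDeriv γ (.encap H (.delta : RT α Act)) .delta
  | D2 (H : Set Act) (a : Act) : a ∈ H → RDeriv γ (.encap H (.act a)) .delta
  | D3 (H : Set Act) (x y : RT α Act) :
      RDeriv γ (.encap H (.alt x y)) (.alt (.encap H x) (.encap H y))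
  | D4 (H : Set Act) (x y : RT α Act) :
      RDeriv γ (.encap H (.seq x y)) (.seq (.encap H x) (.encap H y))
  | GC8S (φ : Fml α) (x y : RT α Act) :
      RDeriv γ (.lm (.gc φ x) y) (.alt (.gc φ (.lm x y)) (.encap Set.univ y))
  | GC9S (φ : Fml α) (x y : RT α Act) :
      RDeriv γ (.cm (.gc φ x) y) (.alt (.gc φ (.cm x y)) (.encap Set.univ y))
  | GC10S (φ : Fml α) (x y : RT α Act) :
      RDeriv γ (.cm x (.gc φ y)) (.alt (.gc φ (.cm x y)) (.encap Set.univ x))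
  | GC11 (H : Set Act) (φ : Fml α) (x : RT α Act) :
      RDeriv γ (.encap H (.gc φ x)) (.gc φ (.encap H x))
  | SE9 (φ : Fml α) (x y : RT α Act) : RDeriv γ (.lm (.se φ x) y) (.se φ (.lm x y))
  | SE10 (φ : Fml α) (x y : RT α Act) : RDeriv γ (.cm (.se φ x) y) (.se φ (.cm x y))
  | SE11 (φ : Fml α) (x y : RT α Act) : RDeriv γ (.cm x (.se φ y)) (.se φ (.cm x y))
  | SE12 (H : Set Act) (φ : Fml α) (x : RT α Act) :
      RDeriv γ (.encap H (.se φ x)) (.se φ (.encap H x))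
  | rdp {V : ℕ → Prop} {t : ℕ → RT α Act} {X : ℕ} :
      WFSpecR γ V t → V X →
      RDeriv γ (.rcn V t X) (substRec V t (t X))
  | rsp {V : ℕ → Prop} {t : ℕ → RT α Act} {p : ℕ → RT α Act} {X : ℕ} :
      WFSpecR γ V t →
      (∀ Y, V Y → Closed (p Y)) →
      (∀ Y, V Y → RDeriv γ (p Y) (substF V p (t Y))) →
      V X →
      RDeriv γ (p X) (.rcn V t X)

/-- Lift a relation on process terms to their optional (√-extended) targets. -/
def ROptR (R : RT α Act → RT α Act → Prop) :
    Option (RT α Act) → Option (RT α Act) → Prop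
  | none, none => True
  | some p, some q => R p q
  | _, _ => False

/-- The (one-directional) simulation conditions of a splitting bisimulation. -/
def RSim (γ : Option Act → Option Act → Option Act)
    (R : RT α Act → RT α Act → Prop) (p q : RT α Act) : Prop :=
  (∀ φ a o, RTr γ p φ a o →
    ∀ χ, RSig γ p χ → ∀ σ : α → V3, eval σ χ ≠ V3.f → eval σ φ ≠ V3.f →
      ∃ ψ o', eval σ ψ = eval σ φ ∧ RTr γ q ψ a o' ∧ ROptR R o o') ∧
  (∀ χ, RSig γ p χ → ∃ χ', RSig γ q χ' ∧ FEquiv χ χ')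

/-- `R` is a bisimulation. -/
def RIsBisim (γ : Option Act → Option Act → Option Act)
    (R : RT α Act → RT α Act → Prop) : Prop :=
  ∀ p q, R p q → RSim γ R p q ∧ RSim γ (fun u v => R v u) q p

/-- Bisimulation equivalence. -/
def RBisim (γ : Option Act → Option Act → Option Act) (p q : RT α Act) : Prop :=
  ∃ R, RIsBisim γ R ∧ R p q

end

/-! The congruence closure of `↔` is itself a bisimulation. By induction on the closure: every
step of a compound term is derived by a transition rule from steps of its components, and the
components' bisimulations match those steps with guards of the same value under the valuation at
hand, so the same rule applies on the other side. Its side conditions (signals and synchronisation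
guards not in `[⊥]`) transfer because related terms emit logically equivalent signals, and a guard
that is not `f` under some valuation is not in `[⊥]`. -/

section Congruence

variable {α Act : Type} {γ : Option Act → Option Act → Option Act}

theorem conjT_ne_f_iff {x y : V3} : conjT x y ≠ .f ↔ x ≠ .f ∧ y ≠ .f := by
  cases x <;> cases y <;> simp [conjT]

theorem impT_of_ne_f {x : V3} (hx : x ≠ .f) (y : V3) : impT x y = y := by
  cases x <;> simp_all [impT]

theorem not_eqBot_of_eval_ne_f {φ : Fml α} {σ : α → V3} (h : eval σ φ ≠ .f) :
    ¬ EqBot φ :=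
  fun hφ => h (hφ σ)

theorem FEquiv.not_eqBot {χ χ' : Fml α} (h : FEquiv χ χ') (hχ : ¬ EqBot χ) : ¬ EqBot χ' :=
  fun hχ' => hχ fun σ => (h σ).trans (hχ' σ)

namespace ROptR

variable {R S : RT α Act → RT α Act → Prop}

theorem eq_none {o : Option (RT α Act)} (h : ROptR R none o) : o = none := by
  cases o with
  | none => rfl
  | some _ => exact h.elim

theorem exists_eq_some {x : RT α Act} {o : Option (RT α Act)} (h : ROptR R (some x) o) :
    ∃ y, o = some y ∧ R x y := by
  cases o with
  | none => exact h.elim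
  | some y => exact ⟨y, rfl, h⟩

theorem map {f g : RT α Act → RT α Act} (hRS : ∀ x y, R x y → S (f x) (g y))
    {o o' : Option (RT α Act)} (h : ROptR R o o') : ROptR S (o.map f) (o'.map g) := by
  cases o <;> cases o' <;> first | trivial | exact h.elim | exact hRS _ _ h

theorem mono (hRS : ∀ x y, R x y → S x y) {o o' : Option (RT α Act)} (h : ROptR R o o') :
    ROptR S o o' := by
  simpa using h.map hRS

end ROptR

namespace RSim

variable {R S : RT α Act → RT α Act → Prop} {p q : RT α Act} {φ χ : Fml α} {a : Act}
  {σ : α → V3}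

theorem mono (hRS : ∀ x y, R x y → S x y) (h : RSim γ R p q) : RSim γ S p q := by
  refine ⟨fun φ a o htr χ hχ σ hχσ hφσ => ?_, h.2⟩
  obtain ⟨ψ, o', e, htr', ho⟩ := h.1 φ a o htr χ hχ σ hχσ hφσ
  exact ⟨ψ, o', e, htr', ho.mono hRS⟩

theorem term (h : RSim γ R p q) (htr : RTr γ p φ a none) (hχ : RSig γ p χ)
    (hχσ : eval σ χ ≠ .f) (hφσ : eval σ φ ≠ .f) :
    ∃ ψ, eval σ ψ = eval σ φ ∧ RTr γ q ψ a none := by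
  obtain ⟨ψ, o', e, htr', ho⟩ := h.1 φ a none htr χ hχ σ hχσ hφσ
  obtain rfl := ho.eq_none
  exact ⟨ψ, e, htr'⟩

theorem step {p' : RT α Act} (h : RSim γ R p q) (htr : RTr γ p φ a (some p'))
    (hχ : RSig γ p χ) (hχσ : eval σ χ ≠ .f) (hφσ : eval σ φ ≠ .f) :
    ∃ ψ q', eval σ ψ = eval σ φ ∧ RTr γ q ψ a (some q') ∧ R p' q' := by
  obtain ⟨ψ, o', e, htr', ho⟩ := h.1 φ a _ htr χ hχ σ hχσ hφσ
  obtain ⟨q', rfl, hq'⟩ := ho.exists_eq_some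
  exact ⟨ψ, q', e, htr', hq'⟩

theorem sync {p' q' : RT α Act} {φ' χ' : Fml α} {b : Act} {o o₂ : Option (RT α Act)}
    (h : RSim γ R p q) (h' : RSim γ R p' q') (htr : RTr γ p φ a o) (htr' : RTr γ p' φ' b o₂)
    (hχ : RSig γ p χ) (hχ' : RSig γ p' χ') (hχσ : eval σ (χ.conj χ') ≠ .f)
    (hφσ : eval σ (φ.conj φ') ≠ .f) :
    ∃ ψ ψ' u u', eval σ (ψ.conj ψ') = eval σ (φ.conj φ') ∧ ¬ EqBot (ψ.conj ψ') ∧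
      RTr γ q ψ a u ∧ RTr γ q' ψ' b u' ∧ ROptR R o u ∧ ROptR R o₂ u' := by
  obtain ⟨hχσ₁, hχσ₂⟩ := conjT_ne_f_iff.1 hχσ
  obtain ⟨hφσ₁, hφσ₂⟩ := conjT_ne_f_iff.1 hφσ
  obtain ⟨ψ, u, e, t, ho⟩ := h.1 φ a o htr χ hχ σ hχσ₁ hφσ₁
  obtain ⟨ψ', u', e', t', ho'⟩ := h'.1 φ' b o₂ htr' χ' hχ' σ hχσ₂ hφσ₂
  have he : eval σ (ψ.conj ψ') = eval σ (φ.conj φ') := by simp only [eval, e, e']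
  exact ⟨ψ, ψ', u, u', he, not_eqBot_of_eval_ne_f (he ▸ hφσ), t, t', ho, ho'⟩

end RSim

theorem RBisim.symm {p q : RT α Act} (h : RBisim γ p q) : RBisim γ q p := by
  obtain ⟨R, hR, hpq⟩ := h
  exact ⟨fun u v => R v u, fun u v huv => ⟨(hR v u huv).2, (hR v u huv).1⟩, hpq⟩

inductive CongrClosure (γ : Option Act → Option Act → Option Act) :
    RT α Act → RT α Act → Prop
  | base {u v} : RBisim γ u v → CongrClosure γ u v
  | alt {u v u' v'} : CongrClosure γ u v → CongrClosure γ u' v' →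
      CongrClosure γ (.alt u u') (.alt v v')
  | seq {u v u' v'} : CongrClosure γ u v → CongrClosure γ u' v' →
      CongrClosure γ (.seq u u') (.seq v v')
  | gc (φ : Fml α) {u v} : CongrClosure γ u v → CongrClosure γ (.gc φ u) (.gc φ v)
  | se (φ : Fml α) {u v} : CongrClosure γ u v → CongrClosure γ (.se φ u) (.se φ v)
  | par {u v u' v'} : CongrClosure γ u v → CongrClosure γ u' v' →
      CongrClosure γ (.par u u') (.par v v')
  | lm {u v u' v'} : CongrClosure γ u v → CongrClosure γ u' v' →
      CongrClosure γ (.lm u u') (.lm v v')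
  | cm {u v u' v'} : CongrClosure γ u v → CongrClosure γ u' v' →
      CongrClosure γ (.cm u u') (.cm v v')
  | encap (H : Set Act) {u v} : CongrClosure γ u v → CongrClosure γ (.encap H u) (.encap H v)

namespace CongrClosure

variable {u v x y x' y' : RT α Act}

theorem symm (h : CongrClosure γ u v) : CongrClosure γ v u := by
  induction h with
  | base h => exact base h.symm
  | alt _ _ ih ih' => exact alt ih ih'
  | seq _ _ ih ih' => exact seq ih ih'
  | gc φ _ ih => exact gc φ ih
  | se φ _ ih => exact se φ ih
  | par _ _ ih ih' => exact par ih ih'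
  | lm _ _ ih ih' => exact lm ih ih'
  | cm _ _ ih ih' => exact cm ih ih'
  | encap H _ ih => exact encap H ih

theorem exists_sig_fequiv (h : CongrClosure γ u v) :
    ∀ χ, RSig γ u χ → ∃ χ', RSig γ v χ' ∧ FEquiv χ χ' := by
  induction h with
  | base h =>
    obtain ⟨R, hR, huv⟩ := h
    exact (hR _ _ huv).1.2
  | alt _ _ ih ih' =>
    intro _ hχ
    cases hχ with
    | alt hs hs' =>
      obtain ⟨χ₁, hs₁, e₁⟩ := ih _ hs
      obtain ⟨χ₂, hs₂, e₂⟩ := ih' _ hs'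
      exact ⟨_, .alt hs₁ hs₂, fun σ => by simp only [eval, e₁ σ, e₂ σ]⟩
  | seq _ _ ih =>
    intro _ hχ
    cases hχ with
    | seq _ hs =>
      obtain ⟨χ₁, hs₁, e₁⟩ := ih _ hs
      exact ⟨χ₁, .seq _ hs₁, e₁⟩
  | gc φ _ ih =>
    intro _ hχ
    cases hχ with
    | gc _ hs =>
      obtain ⟨χ₁, hs₁, e₁⟩ := ih _ hs
      exact ⟨_, .gc φ hs₁, fun σ => by simp only [eval, e₁ σ]⟩
  | se φ _ ih =>
    intro _ hχ
    cases hχ with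
    | se _ hs =>
      obtain ⟨χ₁, hs₁, e₁⟩ := ih _ hs
      exact ⟨_, .se φ hs₁, fun σ => by simp only [eval, e₁ σ]⟩
  | par _ _ ih ih' =>
    intro _ hχ
    cases hχ with
    | par hs hs' =>
      obtain ⟨χ₁, hs₁, e₁⟩ := ih _ hs
      obtain ⟨χ₂, hs₂, e₂⟩ := ih' _ hs'
      exact ⟨_, .par hs₁ hs₂, fun σ => by simp only [eval, e₁ σ, e₂ σ]⟩
  | lm _ _ ih ih' =>
    intro _ hχ
    cases hχ with
    | lm hs hs' =>
      obtain ⟨χ₁, hs₁, e₁⟩ := ih _ hs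
      obtain ⟨χ₂, hs₂, e₂⟩ := ih' _ hs'
      exact ⟨_, .lm hs₁ hs₂, fun σ => by simp only [eval, e₁ σ, e₂ σ]⟩
  | cm _ _ ih ih' =>
    intro _ hχ
    cases hχ with
    | cm hs hs' =>
      obtain ⟨χ₁, hs₁, e₁⟩ := ih _ hs
      obtain ⟨χ₂, hs₂, e₂⟩ := ih' _ hs'
      exact ⟨_, .cm hs₁ hs₂, fun σ => by simp only [eval, e₁ σ, e₂ σ]⟩
  | encap H _ ih =>
    intro _ hχ
    cases hχ with
    | encap _ hs =>
      obtain ⟨χ₁, hs₁, e₁⟩ := ih _ hs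
      exact ⟨χ₁, .encap H hs₁, e₁⟩

theorem sigOK (h : CongrClosure γ u v) (hu : SigOK γ u) : SigOK γ v := by
  obtain ⟨χ, hχ, hnb⟩ := hu
  obtain ⟨χ', hχ', e⟩ := h.exists_sig_fequiv χ hχ
  exact ⟨χ', hχ', e.not_eqBot hnb⟩

theorem rsim_alt (hx : CongrClosure γ x y) (hx' : CongrClosure γ x' y')
    (ih : RSim γ (CongrClosure γ) x y) (ih' : RSim γ (CongrClosure γ) x' y') :
    RSim γ (CongrClosure γ) (.alt x x') (.alt y y') := by
  refine ⟨fun φ a o htr χ hχ σ hχσ hφσ => ?_, (alt hx hx').exists_sig_fequiv⟩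
  cases hχ with
  | alt hs hs' =>
    obtain ⟨hχσ₁, hχσ₂⟩ := conjT_ne_f_iff.1 hχσ
    cases htr with
    | altL _ h hok =>
      obtain ⟨ψ, o', e, t, ho⟩ := ih.1 φ a o h _ hs σ hχσ₁ hφσ
      exact ⟨ψ, o', e, .altL _ t ((alt hx hx').sigOK hok), ho⟩
    | altR _ h hok =>
      obtain ⟨ψ, o', e, t, ho⟩ := ih'.1 φ a o h _ hs' σ hχσ₂ hφσ
      exact ⟨ψ, o', e, .altR _ t ((alt hx hx').sigOK hok), ho⟩

theorem rsim_seq (hx : CongrClosure γ x y) (hx' : CongrClosure γ x' y')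
    (ih : RSim γ (CongrClosure γ) x y) :
    RSim γ (CongrClosure γ) (.seq x x') (.seq y y') := by
  refine ⟨fun φ a o htr χ hχ σ hχσ hφσ => ?_, (seq hx hx').exists_sig_fequiv⟩
  cases hχ with
  | seq _ hs =>
    cases htr with
    | seqT _ h hok =>
      obtain ⟨ψ, e, t⟩ := ih.term h hs hχσ hφσ
      exact ⟨ψ, _, e, .seqT _ t (hx'.sigOK hok), hx'⟩
    | seqS _ h =>
      obtain ⟨ψ, z, e, t, hz⟩ := ih.step h hs hχσ hφσ
      exact ⟨ψ, _, e, .seqS _ t, seq hz hx'⟩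

theorem rsim_gc (φg : Fml α) (hx : CongrClosure γ x y) (ih : RSim γ (CongrClosure γ) x y) :
    RSim γ (CongrClosure γ) (.gc φg x) (.gc φg y) := by
  refine ⟨fun φ a o htr χ hχ σ hχσ hφσ => ?_, (gc φg hx).exists_sig_fequiv⟩
  cases hχ with
  | gc _ hs =>
    cases htr with
    | gcR _ h _ =>
      obtain ⟨hφσ₁, hφgσ⟩ := conjT_ne_f_iff.1 hφσ
      obtain ⟨ψ, o', e, t, ho⟩ :=
        ih.1 _ a o h _ hs σ (by rwa [eval, impT_of_ne_f hφgσ] at hχσ) hφσ₁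
      have hψσ : eval σ (ψ.conj φg) ≠ .f := by simpa only [eval, e] using hφσ
      exact ⟨_, o', by simp only [eval, e], .gcR _ t (not_eqBot_of_eval_ne_f hψσ), ho⟩

theorem rsim_se (φg : Fml α) (hx : CongrClosure γ x y) (ih : RSim γ (CongrClosure γ) x y) :
    RSim γ (CongrClosure γ) (.se φg x) (.se φg y) := by
  refine ⟨fun φ a o htr χ hχ σ hχσ hφσ => ?_, (se φg hx).exists_sig_fequiv⟩
  cases hχ with
  | se _ hs =>
    cases htr with
    | seR _ h hok =>
      obtain ⟨ψ, o', e, t, ho⟩ := ih.1 φ a o h _ hs σ (conjT_ne_f_iff.1 hχσ).2 hφσ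
      exact ⟨ψ, o', e, .seR _ t ((se φg hx).sigOK hok), ho⟩

theorem rsim_encap (H : Set Act) (hx : CongrClosure γ x y) (ih : RSim γ (CongrClosure γ) x y) :
    RSim γ (CongrClosure γ) (.encap H x) (.encap H y) := by
  refine ⟨fun φ a o htr χ hχ σ hχσ hφσ => ?_, (encap H hx).exists_sig_fequiv⟩
  cases hχ with
  | encap _ hs =>
    cases htr with
    | encapR _ h ha =>
      obtain ⟨ψ, o', e, t, ho⟩ := ih.1 φ a _ h _ hs σ hχσ hφσ
      exact ⟨ψ, _, e, .encapR H t ha, ho.map fun _ _ h => encap H h⟩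

theorem rsim_lm (hx : CongrClosure γ x y) (hx' : CongrClosure γ x' y')
    (ih : RSim γ (CongrClosure γ) x y) :
    RSim γ (CongrClosure γ) (.lm x x') (.lm y y') := by
  refine ⟨fun φ a o htr χ hχ σ hχσ hφσ => ?_, (lm hx hx').exists_sig_fequiv⟩
  cases hχ with
  | lm hs _ =>
    have hχσ₁ := (conjT_ne_f_iff.1 hχσ).1
    cases htr with
    | lmT _ h hok hok' =>
      obtain ⟨ψ, e, t⟩ := ih.term h hs hχσ₁ hφσ
      exact ⟨ψ, _, e, .lmT _ t ((lm hx hx').sigOK hok) (hx'.sigOK hok'), hx'⟩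
    | lmS _ h hok hok' =>
      obtain ⟨ψ, z, e, t, hz⟩ := ih.step h hs hχσ₁ hφσ
      exact ⟨ψ, _, e, .lmS _ t ((lm hx hx').sigOK hok) ((par hz hx').sigOK hok'), par hz hx'⟩

theorem rsim_cm (hx : CongrClosure γ x y) (hx' : CongrClosure γ x' y')
    (ih : RSim γ (CongrClosure γ) x y) (ih' : RSim γ (CongrClosure γ) x' y') :
    RSim γ (CongrClosure γ) (.cm x x') (.cm y y') := by
  refine ⟨fun φ a o htr χ hχ σ hχσ hφσ => ?_, (cm hx hx').exists_sig_fequiv⟩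
  cases hχ with
  | cm hs hs' =>
    cases htr with
    | cmTT h h' hγ _ hok =>
      obtain ⟨ψ, ψ', _, _, e, hψ, t, t', ho, ho'⟩ := ih.sync ih' h h' hs hs' hχσ hφσ
      obtain rfl := ho.eq_none
      obtain rfl := ho'.eq_none
      exact ⟨_, _, e, .cmTT t t' hγ hψ ((cm hx hx').sigOK hok), trivial⟩
    | cmTS h h' hγ _ hok =>
      obtain ⟨ψ, ψ', _, _, e, hψ, t, t', ho, ho'⟩ := ih.sync ih' h h' hs hs' hχσ hφσ
      obtain rfl := ho.eq_none
      obtain ⟨z', rfl, hz'⟩ := ho'.exists_eq_some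
      exact ⟨_, _, e, .cmTS t t' hγ hψ ((cm hx hx').sigOK hok), hz'⟩
    | cmST h h' hγ _ hok =>
      obtain ⟨ψ, ψ', _, _, e, hψ, t, t', ho, ho'⟩ := ih.sync ih' h h' hs hs' hχσ hφσ
      obtain ⟨z, rfl, hz⟩ := ho.exists_eq_some
      obtain rfl := ho'.eq_none
      exact ⟨_, _, e, .cmST t t' hγ hψ ((cm hx hx').sigOK hok), hz⟩
    | cmSS h h' hγ _ hok hok' =>
      obtain ⟨ψ, ψ', _, _, e, hψ, t, t', ho, ho'⟩ := ih.sync ih' h h' hs hs' hχσ hφσ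
      obtain ⟨z, rfl, hz⟩ := ho.exists_eq_some
      obtain ⟨z', rfl, hz'⟩ := ho'.exists_eq_some
      exact ⟨_, _, e,
        .cmSS t t' hγ hψ ((cm hx hx').sigOK hok) ((par hz hz').sigOK hok'), par hz hz'⟩

theorem rsim_par (hx : CongrClosure γ x y) (hx' : CongrClosure γ x' y')
    (ih : RSim γ (CongrClosure γ) x y) (ih' : RSim γ (CongrClosure γ) x' y') :
    RSim γ (CongrClosure γ) (.par x x') (.par y y') := by
  refine ⟨fun φ a o htr χ hχ σ hχσ hφσ => ?_, (par hx hx').exists_sig_fequiv⟩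
  cases hχ with
  | par hs hs' =>
    obtain ⟨hχσ₁, hχσ₂⟩ := conjT_ne_f_iff.1 hχσ
    have hsig := (par hx hx').sigOK
    cases htr with
    | parTL _ h hok hok' =>
      obtain ⟨ψ, e, t⟩ := ih.term h hs hχσ₁ hφσ
      exact ⟨ψ, _, e, .parTL _ t (hsig hok) (hx'.sigOK hok'), hx'⟩
    | parTR _ h hok hok' =>
      obtain ⟨ψ, e, t⟩ := ih'.term h hs' hχσ₂ hφσ
      exact ⟨ψ, _, e, .parTR _ t (hsig hok) (hx.sigOK hok'), hx⟩
    | parSL _ h hok hok' =>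
      obtain ⟨ψ, z, e, t, hz⟩ := ih.step h hs hχσ₁ hφσ
      exact ⟨ψ, _, e, .parSL _ t (hsig hok) ((par hz hx').sigOK hok'), par hz hx'⟩
    | parSR _ h hok hok' =>
      obtain ⟨ψ, z', e, t, hz'⟩ := ih'.step h hs' hχσ₂ hφσ
      exact ⟨ψ, _, e, .parSR _ t (hsig hok) ((par hx hz').sigOK hok'), par hx hz'⟩
    | parCTT h h' hγ _ hok =>
      obtain ⟨ψ, ψ', _, _, e, hψ, t, t', ho, ho'⟩ := ih.sync ih' h h' hs hs' hχσ hφσ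
      obtain rfl := ho.eq_none
      obtain rfl := ho'.eq_none
      exact ⟨_, _, e, .parCTT t t' hγ hψ (hsig hok), trivial⟩
    | parCTS h h' hγ _ hok =>
      obtain ⟨ψ, ψ', _, _, e, hψ, t, t', ho, ho'⟩ := ih.sync ih' h h' hs hs' hχσ hφσ
      obtain rfl := ho.eq_none
      obtain ⟨z', rfl, hz'⟩ := ho'.exists_eq_some
      exact ⟨_, _, e, .parCTS t t' hγ hψ (hsig hok), hz'⟩
    | parCST h h' hγ _ hok =>
      obtain ⟨ψ, ψ', _, _, e, hψ, t, t', ho, ho'⟩ := ih.sync ih' h h' hs hs' hχσ hφσ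
      obtain ⟨z, rfl, hz⟩ := ho.exists_eq_some
      obtain rfl := ho'.eq_none
      exact ⟨_, _, e, .parCST t t' hγ hψ (hsig hok), hz⟩
    | parCSS h h' hγ _ hok hok' =>
      obtain ⟨ψ, ψ', _, _, e, hψ, t, t', ho, ho'⟩ := ih.sync ih' h h' hs hs' hχσ hφσ
      obtain ⟨z, rfl, hz⟩ := ho.exists_eq_some
      obtain ⟨z', rfl, hz'⟩ := ho'.exists_eq_some
      exact ⟨_, _, e, .parCSS t t' hγ hψ (hsig hok) ((par hz hz').sigOK hok'), par hz hz'⟩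

theorem rsim (h : CongrClosure γ u v) : RSim γ (CongrClosure γ) u v := by
  induction h with
  | base h =>
    obtain ⟨R, hR, huv⟩ := h
    exact (hR _ _ huv).1.mono fun _ _ hxy => base ⟨R, hR, hxy⟩
  | alt hx hx' ih ih' => exact rsim_alt hx hx' ih ih'
  | seq hx hx' ih => exact rsim_seq hx hx' ih
  | gc φ hx ih => exact rsim_gc φ hx ih
  | se φ hx ih => exact rsim_se φ hx ih
  | par hx hx' ih ih' => exact rsim_par hx hx' ih ih'
  | lm hx hx' ih => exact rsim_lm hx hx' ih
  | cm hx hx' ih ih' => exact rsim_cm hx hx' ih ih'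
  | encap H hx ih => exact rsim_encap H hx ih

theorem isBisim : RIsBisim γ (CongrClosure (α := α) (Act := Act) γ) :=
  fun _ _ h => ⟨h.rsim, h.symm.rsim.mono fun _ _ hxy => hxy.symm⟩

theorem rbisim (h : CongrClosure γ u v) : RBisim γ u v :=
  ⟨_, isBisim, h⟩

end CongrClosure

end Congruence

theorem ctACPpsREC_congruence_general {α Act : Type}
    (γ : Option Act → Option Act → Option Act)
    (p q p' q' : RT α Act) (φ : Fml α) (H : Set Act)
    (h : RBisim γ p q) (h' : RBisim γ p' q') :
    RBisim γ (.alt p p') (.alt q q') ∧ RBisim γ (.seq p p') (.seq q q') ∧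
    RBisim γ (.gc φ p) (.gc φ q) ∧ RBisim γ (.se φ p) (.se φ q) ∧
    RBisim γ (.par p p') (.par q q') ∧ RBisim γ (.lm p p') (.lm q q') ∧
    RBisim γ (.cm p p') (.cm q q') ∧ RBisim γ (.encap H p) (.encap H q) := by
  have hc : CongrClosure γ p q := .base h
  have hc' : CongrClosure γ p' q' := .base h'
  exact ⟨(hc.alt hc').rbisim, (hc.seq hc').rbisim, (hc.gc φ).rbisim, (hc.se φ).rbisim,
    (hc.par hc').rbisim, (hc.lm hc').rbisim, (hc.cm hc').rbisim, (hc.encap H).rbisim⟩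

/-- Bisimulation equivalence is a congruence for the operators of ctACPps+REC. -/
theorem ctACPpsREC_congruence {α Act : Type} [Fintype α] [Fintype Act]
    (γ : Option Act → Option Act → Option Act)
    (hγcomm : ∀ a b, γ a b = γ b a)
    (hγassoc : ∀ a b c, γ (γ a b) c = γ a (γ b c))
    (hγdelta : ∀ a, γ none a = none)
    (p q p' q' : RT α Act) (φ : Fml α) (H : Set Act)
    (hp : Closed p ∧ WT γ p) (hq : Closed q ∧ WT γ q)
    (hp' : Closed p' ∧ WT γ p') (hq' : Closed q' ∧ WT γ q')
    (h : RBisim γ p q) (h' : RBisim γ p' q') :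
    RBisim γ (.alt p p') (.alt q q') ∧ RBisim γ (.seq p p') (.seq q q') ∧
    RBisim γ (.gc φ p) (.gc φ q) ∧ RBisim γ (.se φ p) (.se φ q) ∧
    RBisim γ (.par p p') (.par q q') ∧ RBisim γ (.lm p p') (.lm q q') ∧
    RBisim γ (.cm p p') (.cm q q') ∧ RBisim γ (.encap H p) (.encap H q) :=
  ctACPpsREC_congruence_general γ p q p' q' φ H h h'
end

section
/- Internalized logical equivalence in LP→⊥: for all formulas A and B of LP→⊥, A ≡ B (i.e., ν(A)=ν(B) for every three-valued valuation ν) if and only if ⊢ (A↔B)∧(¬A↔¬B) (this formula is a theorem of the Hilbert system of LP→⊥). -/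
/-!
Soundness is a truth-table check of each axiom, and `(A↔B)∧(¬A↔¬B)` avoids the value f only when
`A` and `B` have the same value. For completeness, read a value as two classical bits, "is true"
(t or b) and "is false" (f or b): ∧, ∨, → act classically on the truth bits, and by the De Morgan
axioms the falsity bits of compound formulas are classical combinations of the bits of their parts.
A Kalmár-style induction then derives, from hypotheses fixing the bits of the variables, each
formula or its classical negation `· → ⊥`, and likewise its negation. Peirce's law gives excluded
middle for `· → ⊥`, which eliminates these hypotheses one variable at a time.
-/

set_option autoImplicit true
set_option maxHeartbeats 1000000

variable {α : Type} {Γ Δ : Set (Fml α)} {A B C : Fml α}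

theorem Hilb.sound (h : Hilb Γ A) : SemCons Γ A := by
  intro σ hΓ
  induction h with
  | hyp h => exact hΓ _ h
  | @mp X Y _ _ ihXY ihX =>
    simp only [eval] at ihXY
    revert ihXY ihX
    cases eval σ X <;> cases eval σ Y <;> decide
  | ax4 X | ax11 X | ax15 X =>
    simp only [eval, Fml.iff']
    cases eval σ X <;> decide
  | ax1 X Y | ax3 X Y | ax5 X Y | ax6 X Y | ax7 X Y | ax8 X Y | ax9 X Y | ax12 X Y | ax13 X Y
  | ax14 X Y =>
    simp only [eval, Fml.iff']
    cases eval σ X <;> cases eval σ Y <;> decide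
  | ax2 X Y Z | ax10 X Y Z =>
    simp only [eval]
    cases eval σ X <;> cases eval σ Y <;> cases eval σ Z <;> decide

theorem eval_eq_of_eval_internEq_ne_f {σ : α → V3} (h : eval σ (InternEq A B) ≠ .f) :
    eval σ A = eval σ B := by
  simp only [InternEq, Fml.iff', eval] at h
  revert h
  cases eval σ A <;> cases eval σ B <;> decide

namespace Hilb

theorem mono (hΓΔ : Γ ⊆ Δ) (h : Hilb Γ A) : Hilb Δ A := by
  induction h with
  | hyp hA => exact hyp (hΓΔ hA)
  | mp _ _ ihAB ihA => exact ihAB.mp ihA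
  | ax1 | ax2 | ax3 | ax4 | ax5 | ax6 | ax7 | ax8 | ax9 | ax10 | ax11 | ax12 | ax13 | ax14
  | ax15 =>
    solve_by_elim only [ax1, ax2, ax3, ax4, ax5, ax6, ax7, ax8, ax9, ax10, ax11, ax12, ax13, ax14,
      ax15]

theorem imp_intro (h : Hilb Γ B) : Hilb Γ (A.imp B) := (ax1 B A).mp h

theorem imp_self : Hilb Γ (A.imp A) :=
  ((ax2 A (A.imp A) A).mp (ax1 A (A.imp A))).mp (ax1 A A)

theorem deduction (h : Hilb (insert A Γ) B) : Hilb Γ (A.imp B) := by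
  induction h with
  | hyp hB =>
    rcases hB with rfl | hB
    · exact imp_self
    · exact imp_intro (hyp hB)
  | mp _ _ ihAB ihA => exact ((ax2 _ _ _).mp ihAB).mp ihA
  | ax1 | ax2 | ax3 | ax4 | ax5 | ax6 | ax7 | ax8 | ax9 | ax10 | ax11 | ax12 | ax13 | ax14
  | ax15 => exact imp_intro (by
    solve_by_elim only [ax1, ax2, ax3, ax4, ax5, ax6, ax7, ax8, ax9, ax10, ax11, ax12, ax13, ax14,
      ax15])

theorem imp_trans (hAB : Hilb Γ (A.imp B)) (hBC : Hilb Γ (B.imp C)) : Hilb Γ (A.imp C) :=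
  ((ax2 A B C).mp (imp_intro hBC)).mp hAB

theorem and_intro (hA : Hilb Γ A) (hB : Hilb Γ B) : Hilb Γ (A.conj B) := ((ax7 A B).mp hA).mp hB

theorem and_left (h : Hilb Γ (A.conj B)) : Hilb Γ A := (ax5 A B).mp h

theorem and_right (h : Hilb Γ (A.conj B)) : Hilb Γ B := (ax6 A B).mp h

theorem disj_imp (hA : Hilb Γ (A.imp C)) (hB : Hilb Γ (B.imp C)) : Hilb Γ ((A.disj B).imp C) :=
  ((ax10 A B C).mp hA).mp hB

theorem or_elim (h : Hilb Γ (A.disj B)) (hA : Hilb Γ (A.imp C)) (hB : Hilb Γ (B.imp C)) :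
    Hilb Γ C :=
  (disj_imp hA hB).mp h

theorem iff_comm (h : Hilb Γ (Fml.iff' A B)) : Hilb Γ (Fml.iff' B A) :=
  and_intro (and_right h) (and_left h)

theorem neg_bot : Hilb Γ (Fml.bot.neg : Fml α) := or_elim (ax15 .bot) (ax4 _) imp_self

theorem em : Hilb Γ (A.disj (A.imp .bot)) := by
  refine (ax3 _ Fml.bot).mp (deduction ?_)
  have hnot : Hilb (insert ((A.disj (A.imp .bot)).imp .bot) Γ) ((A.disj (A.imp .bot)).imp .bot) :=
    hyp (Set.mem_insert _ _)
  exact (ax9 _ _).mp (imp_trans (ax8 _ _) hnot)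

theorem by_cases (hA : Hilb (insert A Γ) B) (hnA : Hilb (insert (A.imp .bot) Γ) B) : Hilb Γ B :=
  or_elim em (deduction hA) (deduction hnA)

end Hilb

/-- Reading `b` as "both true and false", a value is determined by whether it is at least true
and whether it is at least false. -/
def V3.isTrue : V3 → Bool
  | .f => false
  | _ => true

def V3.isFalse : V3 → Bool
  | .t => false
  | _ => true

namespace V3

variable (v w : V3)

@[simp] theorem isTrue_negT : (negT v).isTrue = v.isFalse := by cases v <;> rfl
@[simp] theorem isFalse_negT : (negT v).isFalse = v.isTrue := by cases v <;> rfl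

@[simp] theorem isTrue_conjT : (conjT v w).isTrue = (v.isTrue && w.isTrue) := by
  cases v <;> cases w <;> rfl
@[simp] theorem isFalse_conjT : (conjT v w).isFalse = (v.isFalse || w.isFalse) := by
  cases v <;> cases w <;> rfl

@[simp] theorem isTrue_disjT : (disjT v w).isTrue = (v.isTrue || w.isTrue) := by
  cases v <;> cases w <;> rfl
@[simp] theorem isFalse_disjT : (disjT v w).isFalse = (v.isFalse && w.isFalse) := by
  cases v <;> cases w <;> rfl

@[simp] theorem isTrue_impT : (impT v w).isTrue = (!v.isTrue || w.isTrue) := by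
  cases v <;> cases w <;> rfl
@[simp] theorem isFalse_impT : (impT v w).isFalse = (v.isTrue && w.isFalse) := by
  cases v <;> cases w <;> rfl

end V3

def Fml.lit (A : Fml α) : Bool → Fml α
  | true => A
  | false => A.imp .bot

namespace Hilb

theorem lit_of_iff {c : Bool} (h : Hilb Γ (Fml.iff' A B)) (hA : Hilb Γ (A.lit c)) :
    Hilb Γ (B.lit c) := by
  cases c
  · exact imp_trans (and_right h) hA
  · exact (and_left h).mp hA

theorem iff_of_lit {c : Bool} (hA : Hilb Γ (A.lit c)) (hB : Hilb Γ (B.lit c)) :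
    Hilb Γ (Fml.iff' A B) := by
  cases c
  · exact and_intro (imp_trans hA (ax4 B)) (imp_trans hB (ax4 A))
  · exact and_intro (imp_intro hB) (imp_intro hA)

variable {a b : Bool}

theorem lit_conj (hA : Hilb Γ (A.lit a)) (hB : Hilb Γ (B.lit b)) :
    Hilb Γ ((A.conj B).lit (a && b)) := by
  cases a <;> cases b
  case true.true => exact and_intro hA hB
  case true.false => exact imp_trans (ax6 A B) hB
  all_goals exact imp_trans (ax5 A B) hA

theorem lit_disj (hA : Hilb Γ (A.lit a)) (hB : Hilb Γ (B.lit b)) :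
    Hilb Γ ((A.disj B).lit (a || b)) := by
  cases a <;> cases b
  case false.false => exact disj_imp hA hB
  case false.true => exact (ax9 A B).mp hB
  all_goals exact (ax8 A B).mp hA

theorem lit_imp (hA : Hilb Γ (A.lit a)) (hB : Hilb Γ (B.lit b)) :
    Hilb Γ ((A.imp B).lit (!a || b)) := by
  cases a <;> cases b
  case true.false =>
    refine deduction ((mono (Set.subset_insert _ _) hB).mp ?_)
    exact (hyp (Set.mem_insert _ _)).mp (mono (Set.subset_insert _ _) hA)
  case true.true => exact imp_intro hB
  all_goals exact imp_trans hA (ax4 B)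

theorem of_forall_value {P G : Fml α}
    (h : ∀ v : V3, Hilb (insert (P.lit v.isTrue) (insert (P.neg.lit v.isFalse) Γ)) G) :
    Hilb Γ G := by
  refine by_cases (A := P) (by_cases (A := P.neg) ?_ ?_) (by_cases (A := P.neg) ?_ ?_)
  · rw [Set.insert_comm]; exact h .b
  · rw [Set.insert_comm]; exact h .t
  · rw [Set.insert_comm]; exact h .f
  · -- no value makes both `P` and `¬P` false
    refine (ax4 G).mp (or_elim (ax15 P) (hyp ?_) (hyp ?_)) <;> simp

end Hilb

section Completeness

variable [DecidableEq α]

def Fml.vars : Fml α → Finset α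
  | .var x => {x}
  | .bot => ∅
  | .neg A => A.vars
  | .conj A B | .disj A B | .imp A B => A.vars ∪ B.vars

def valuationHyps (s : Finset α) (σ : α → V3) : Set (Fml α) :=
  ⋃ x ∈ s, {(Fml.var x).lit (σ x).isTrue, (Fml.var x).neg.lit (σ x).isFalse}

/-- Kalmár's lemma, for the two bits of the value. -/
theorem Hilb.lit_eval {s : Finset α} (σ : α → V3) (hs : C.vars ⊆ s) :
    Hilb (valuationHyps s σ) (C.lit (eval σ C).isTrue) ∧
      Hilb (valuationHyps s σ) (C.neg.lit (eval σ C).isFalse) := by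
  induction C with
  | var x =>
    have hx : x ∈ s := hs (Finset.mem_singleton_self x)
    exact ⟨hyp (Set.mem_biUnion hx (Set.mem_insert _ _)),
      hyp (Set.mem_biUnion hx (Set.mem_insert_of_mem _ rfl))⟩
  | bot => exact ⟨imp_self, neg_bot⟩
  | neg A ih =>
    obtain ⟨hA, hnA⟩ := ih hs
    simp only [eval, V3.isTrue_negT, V3.isFalse_negT]
    exact ⟨hnA, lit_of_iff (iff_comm (ax11 A)) hA⟩
  | conj A B ihA ihB =>
    obtain ⟨hA, hnA⟩ := ihA (subset_trans Finset.subset_union_left hs)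
    obtain ⟨hB, hnB⟩ := ihB (subset_trans Finset.subset_union_right hs)
    simp only [eval, V3.isTrue_conjT, V3.isFalse_conjT]
    exact ⟨lit_conj hA hB, lit_of_iff (iff_comm (ax13 A B)) (lit_disj hnA hnB)⟩
  | disj A B ihA ihB =>
    obtain ⟨hA, hnA⟩ := ihA (subset_trans Finset.subset_union_left hs)
    obtain ⟨hB, hnB⟩ := ihB (subset_trans Finset.subset_union_right hs)
    simp only [eval, V3.isTrue_disjT, V3.isFalse_disjT]
    exact ⟨lit_disj hA hB, lit_of_iff (iff_comm (ax14 A B)) (lit_conj hnA hnB)⟩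
  | imp A B ihA ihB =>
    obtain ⟨hA, hnA⟩ := ihA (subset_trans Finset.subset_union_left hs)
    obtain ⟨hB, hnB⟩ := ihB (subset_trans Finset.subset_union_right hs)
    simp only [eval, V3.isTrue_impT, V3.isFalse_impT]
    exact ⟨lit_imp hA hB, lit_of_iff (iff_comm (ax12 A B)) (lit_conj hA hnB)⟩

theorem valuationHyps_update_insert {s : Finset α} {x : α} (hx : x ∉ s) (σ : α → V3) (v : V3) :
    valuationHyps (insert x s) (Function.update σ x v) =
      insert ((Fml.var x).lit v.isTrue) (insert ((Fml.var x).neg.lit v.isFalse)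
        (valuationHyps s σ)) := by
  have hs : valuationHyps s (Function.update σ x v) = valuationHyps s σ :=
    Set.iUnion₂_congr fun y hy => by rw [Function.update_of_ne (ne_of_mem_of_not_mem hy hx)]
  rw [valuationHyps, Finset.set_biUnion_insert, ← valuationHyps, hs, Function.update_self,
    Set.insert_union, Set.singleton_union]

theorem Hilb.of_forall_valuationHyps {G : Fml α} (s : Finset α)
    (h : ∀ σ, Hilb (valuationHyps s σ) G) : Hilb ∅ G := by
  induction s using Finset.induction_on with
  | empty => simpa [valuationHyps] using h fun _ => .t
  | insert x s hx ih =>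
    exact ih fun σ => of_forall_value fun v =>
      valuationHyps_update_insert hx σ v ▸ h (Function.update σ x v)

end Completeness

/-- Internalized logical equivalence in LP→⊥:
A ≡ B iff ⊢ (A↔B)∧(¬A↔¬B). -/
theorem LP_internalized_equivalence (A B : Fml ℕ) :
    FEquiv A B ↔ Hilb (∅ : Set (Fml ℕ)) (InternEq A B) := by
  constructor
  · intro hAB
    refine Hilb.of_forall_valuationHyps (A.vars ∪ B.vars) fun σ => ?_
    obtain ⟨hA, hnA⟩ := Hilb.lit_eval σ (Finset.subset_union_left (s₂ := B.vars))
    obtain ⟨hB, hnB⟩ := Hilb.lit_eval σ (Finset.subset_union_right (s₁ := A.vars))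
    rw [hAB σ] at hA hnA
    exact Hilb.and_intro (Hilb.iff_of_lit hA hB) (Hilb.iff_of_lit hnA hnB)
  · intro h σ
    exact eval_eq_of_eval_internEq_ne_f (h.sound σ (by simp))
end
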